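/- arXiv:2507.12623 — 4 statements merged into one kernel-verified Lean document; each statement's English description precedes it below -/
import Mathlib

section
/- Let 0 < a₁ ≤ a₂ ≤ a₃ ≤ a₄ ≤ a₅ ≤ 1 be real numbers with a₁ + a₂ + a₃ + a₄ + a₅ > 2. Then there are at most four 3-element subsets S ⊆ {1,2,3,4,5} such that ∑_{i∈S} aᵢ < 1. -/
open scoped Classical in
/-- If 0 < a₁ ≤ a₂ ≤ a₃ ≤ a₄ ≤ a₅ ≤ 1 and the total sum exceeds 2, then at most
four 3-element subsets S of {1,...,5} satisfy ∑_{i∈S} aᵢ < 1. -/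
theorem stmt_0 (a : Fin 5 → ℝ) (hpos : 0 < a 0) (hmono : Monotone a)
    (hle : a 4 ≤ 1) (hsum : 2 < ∑ i, a i) :
    ((Finset.univ : Finset (Finset (Fin 5))).filter
      (fun S => S.card = 3 ∧ ∑ i ∈ S, a i < 1)).card ≤ 4 := by
  have h01 : a 0 ≤ a 1 := hmono (by decide)
  have h12 : a 1 ≤ a 2 := hmono (by decide)
  have h23 : a 2 ≤ a 3 := hmono (by decide)
  have h34 : a 3 ≤ a 4 := hmono (by decide)
  rw [Fin.sum_univ_five] at hsum
  have h024 : (1:ℝ) ≤ a 0 + a 2 + a 4 := by by_contra h; push_neg at h; linarith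
  have h124 : (1:ℝ) ≤ a 1 + a 2 + a 4 := by by_contra h; push_neg at h; linarith
  have h034 : (1:ℝ) ≤ a 0 + a 3 + a 4 := by by_contra h; push_neg at h; linarith
  have h134 : (1:ℝ) ≤ a 1 + a 3 + a 4 := by by_contra h; push_neg at h; linarith
  have h234 : (1:ℝ) ≤ a 2 + a 3 + a 4 := by by_contra h; push_neg at h; linarith
  by_cases hc : a 0 + a 1 + a 4 < 1
  · have h123 : (1:ℝ) ≤ a 1 + a 2 + a 3 := by by_contra h; push_neg at h; linarith
    calc ((Finset.univ : Finset (Finset (Fin 5))).filter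
        (fun S => S.card = 3 ∧ ∑ i ∈ S, a i < 1)).card
        ≤ ({{0,1,2},{0,1,3},{0,1,4},{0,2,3}} : Finset (Finset (Fin 5))).card := by
          apply Finset.card_le_card
          intro S hS
          simp only [Finset.mem_filter] at hS
          obtain ⟨-, hc3, hlt⟩ := hS
          have hmem : S ∈ (Finset.univ : Finset (Finset (Fin 5))) := Finset.mem_univ S
          fin_cases hmem <;>
            first
            | decide
            | (exact absurd hc3 (by decide))
            | (exfalso
               simp only [Finset.sum_mk, Multiset.map_coe, Multiset.sum_coe,
                 List.map_cons, List.map_nil, List.sum_cons, List.sum_nil, add_zero,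
                 show ((⟨0, by omega⟩ : Fin 5)) = 0 from rfl,
                 show ((⟨1, by omega⟩ : Fin 5)) = 1 from rfl,
                 show ((⟨2, by omega⟩ : Fin 5)) = 2 from rfl,
                 show ((⟨3, by omega⟩ : Fin 5)) = 3 from rfl,
                 show ((⟨4, by omega⟩ : Fin 5)) = 4 from rfl] at hlt
               try push_neg at hc
               linarith)
      _ ≤ 4 := by decide
  · calc ((Finset.univ : Finset (Finset (Fin 5))).filter
        (fun S => S.card = 3 ∧ ∑ i ∈ S, a i < 1)).card
        ≤ ({{0,1,2},{0,1,3},{0,2,3},{1,2,3}} : Finset (Finset (Fin 5))).card := by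
          apply Finset.card_le_card
          intro S hS
          simp only [Finset.mem_filter] at hS
          obtain ⟨-, hc3, hlt⟩ := hS
          have hmem : S ∈ (Finset.univ : Finset (Finset (Fin 5))) := Finset.mem_univ S
          fin_cases hmem <;>
            first
            | decide
            | (exact absurd hc3 (by decide))
            | (exfalso
               simp only [Finset.sum_mk, Multiset.map_coe, Multiset.sum_coe,
                 List.map_cons, List.map_nil, List.sum_cons, List.sum_nil, add_zero,
                 show ((⟨0, by omega⟩ : Fin 5)) = 0 from rfl,
                 show ((⟨1, by omega⟩ : Fin 5)) = 1 from rfl,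
                 show ((⟨2, by omega⟩ : Fin 5)) = 2 from rfl,
                 show ((⟨3, by omega⟩ : Fin 5)) = 3 from rfl,
                 show ((⟨4, by omega⟩ : Fin 5)) = 4 from rfl] at hlt
               try push_neg at hc
               linarith)
      _ ≤ 4 := by decide
end

section
/- Any family of 3-element subsets of {1,2,3,4,5} in which every two distinct members intersect in at least 2 elements has cardinality at most 4. -/
/-!
Two distinct 3-subsets of a 5-set meet in at least two points exactly when their union misses a
point, i.e. when their complements, which are 2-subsets, meet. So the complements form an
intersecting family of 2-subsets of a 5-set, and Erdős–Ko–Rado bounds it by `choose 4 1 = 4`.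
-/

open Finset FinsetFamily

namespace Finset

variable {α : Type*} [DecidableEq α] [Fintype α]

theorem intersecting_compls_iff {𝒜 : Finset (Finset α)} :
    (𝒜ᶜˢ : Set (Finset α)).Intersecting ↔ ∀ s ∈ 𝒜, ∀ t ∈ 𝒜, s ∪ t ≠ univ := by
  simp only [Set.Intersecting, mem_coe, forall_mem_compls, disjoint_compl_left_iff,
    ← codisjoint_iff_compl_le_left, codisjoint_iff, sup_eq_union, top_eq_univ, ne_eq]

theorem card_le_choose_of_forall_union_ne_univ {n r : ℕ} {𝒜 : Finset (Finset (Fin n))}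
    (h𝒜 : (𝒜 : Set (Finset (Fin n))).Sized r) (hr : n ≤ 2 * r)
    (hunion : ∀ s ∈ 𝒜, ∀ t ∈ 𝒜, s ∪ t ≠ univ) :
    #𝒜 ≤ (n - 1).choose (n - r - 1) := by
  rw [← card_compls]
  exact erdos_ko_rado (intersecting_compls_iff.2 hunion) (by simpa using h𝒜.compls) (by omega)

end Finset

/-- A family of 3-element subsets of {1,...,5} in which any two distinct
members intersect in at least 2 elements has at most 4 members. -/
theorem stmt_5 (F : Finset (Finset (Fin 5))) (hcard : ∀ S ∈ F, S.card = 3)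
    (hint : ∀ S ∈ F, ∀ T ∈ F, S ≠ T → 2 ≤ (S ∩ T).card) :
    F.card ≤ 4 := by
  have hunion : ∀ S ∈ F, ∀ T ∈ F, S ∪ T ≠ univ := by
    intro S hS T hT hST
    have h5 : #(S ∪ T) = 5 := by rw [hST, card_univ, Fintype.card_fin]
    rcases eq_or_ne S T with rfl | hne
    · rw [union_self, hcard S hS] at h5
      omega
    · have hsum := card_union_add_card_inter S T
      rw [hcard S hS, hcard T hT] at hsum
      have := hint S hS T hT hne
      omega
  exact card_le_choose_of_forall_union_ne_univ hcard (by norm_num) hunion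
end

section
/- Let a₁,...,a₅ be real numbers with 0 < aᵢ ≤ 1 and ∑ᵢ aᵢ > 2. Then there are at most four 3-element subsets S ⊆ {1,2,3,4,5} with ∑_{i∈S} aᵢ ≤ 1. -/
def tri : Fin 10 → Finset (Fin 5) :=
  ![{0,1,2}, {0,1,3}, {0,1,4}, {0,2,3}, {0,2,4},
    {0,3,4}, {1,2,3}, {1,2,4}, {1,3,4}, {2,3,4}]

lemma tri_inj : Function.Injective tri := by decide

lemma tri_surj : ∀ S : Finset (Fin 5), S.card = 3 → ∃ i, tri i = S := by decide

def compat : Fin 10 → Fin 10 → Bool :=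
  ![![true, true, true, true, true, false, true, true, false, false],
    ![true, true, true, true, false, true, true, false, true, false],
    ![true, true, true, false, true, true, false, true, true, false],
    ![true, true, false, true, true, true, true, false, false, true],
    ![true, false, true, true, true, true, false, true, false, true],
    ![false, true, true, true, true, true, false, false, true, true],
    ![true, true, false, true, false, false, true, true, true, true],
    ![true, false, true, false, true, false, true, true, true, true],
    ![false, true, true, false, false, true, true, true, true, true],
    ![false, false, false, true, true, true, true, true, true, true]]

lemma compat_iff : ∀ i j, compat i j = true ↔ 2 ≤ (tri i ∩ tri j).card := by decide

instance : Std.Commutative (α := ℕ) (· ||| ·) := ⟨Nat.or_comm⟩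
instance : Std.Associative (α := ℕ) (· ||| ·) := ⟨Nat.or_assoc⟩

/-- bitmask of a set of indices -/
def mask (G : Finset (Fin 10)) : ℕ :=
  Finset.fold (· ||| ·) 0 (fun i : Fin 10 => 2 ^ i.val) G

lemma mask_lt (G : Finset (Fin 10)) : mask G < 1024 := by
  classical
  induction G using Finset.induction_on with
  | empty => simp [mask]
  | @insert a G ha ih =>
      rw [mask, Finset.fold_insert ha]
      have h1 : 2 ^ (a : ℕ) < 2 ^ 10 :=
        Nat.pow_lt_pow_right (by norm_num) a.isLt
      exact Nat.or_lt_two_pow (n := 10) h1 ih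

lemma mask_testBit (G : Finset (Fin 10)) (i : Fin 10) :
    (mask G).testBit i = true ↔ i ∈ G := by
  classical
  induction G using Finset.induction_on with
  | empty => simp [mask]
  | @insert a G ha ih =>
      rw [mask, Finset.fold_insert ha]
      rw [Nat.testBit_or]
      rw [show Finset.fold (· ||| · : ℕ → ℕ → ℕ) 0 (fun i : Fin 10 => 2 ^ i.val) G = mask G from rfl]
      simp only [Bool.or_eq_true, ih, Finset.mem_insert]
      constructor
      · rintro (h | h)
        · left
          have : (i : ℕ) = (a : ℕ) := by
            by_contra hne
            rw [Nat.testBit_two_pow_of_ne (Ne.symm hne)] at h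
            exact absurd h (by simp)
          exact Fin.ext this
        · exact Or.inr h
      · rintro (rfl | h)
        · left; exact Nat.testBit_two_pow_self
        · exact Or.inr h

set_option maxRecDepth 10000 in
lemma mask_lemma : ∀ n : Fin 1024,
    (∀ i : Fin 10, ∀ j : Fin 10,
      n.val.testBit i → n.val.testBit j → compat i j) →
    (Finset.univ.filter (fun i : Fin 10 => n.val.testBit i.val)).card ≤ 4 := by
  decide

lemma aux_comb : ∀ G : Finset (Fin 10),
    (∀ i ∈ G, ∀ j ∈ G, 2 ≤ (tri i ∩ tri j).card) → G.card ≤ 4 := by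
  intro G h
  have hGeq : G = Finset.univ.filter (fun i : Fin 10 => (mask G).testBit i.val) := by
    ext i
    simp [mask_testBit]
  have := mask_lemma ⟨mask G, mask_lt G⟩ (by
    intro i j hi hj
    have hi' := (mask_testBit G i).mp hi
    have hj' := (mask_testBit G j).mp hj
    exact (compat_iff i j).mpr (h i hi' j hj'))
  rw [hGeq]
  exact this

open scoped Classical in
/-- For weights in (0,1] with total sum > 2, at most four 3-element subsets
have coordinate sum ≤ 1. -/
theorem stmt_6 (a : Fin 5 → ℝ) (hpos : ∀ i, 0 < a i) (hle : ∀ i, a i ≤ 1)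
    (hsum : 2 < ∑ i, a i) :
    ((Finset.univ : Finset (Finset (Fin 5))).filter
      (fun S => S.card = 3 ∧ ∑ i ∈ S, a i ≤ 1)).card ≤ 4 := by
  set F := ((Finset.univ : Finset (Finset (Fin 5))).filter
      (fun S => S.card = 3 ∧ ∑ i ∈ S, a i ≤ 1)) with hF
  -- key: any two members of F intersect in ≥ 2 elements
  have key : ∀ S ∈ F, ∀ T ∈ F, 2 ≤ (S ∩ T).card := by
    intro S hS T hT
    simp only [hF, Finset.mem_filter] at hS hT
    obtain ⟨-, hScard, hSsum⟩ := hS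
    obtain ⟨-, hTcard, hTsum⟩ := hT
    by_contra h
    push_neg at h
    have hcu : (S ∪ T).card + (S ∩ T).card = S.card + T.card :=
      Finset.card_union_add_card_inter S T
    have h5 : (S ∪ T).card = 5 := by
      have := Finset.card_le_univ (S ∪ T)
      simp at this
      omega
    have huniv : S ∪ T = Finset.univ :=
      Finset.eq_univ_of_card _ (by simp [h5])
    have hsum2 : ∑ i ∈ S ∪ T, a i + ∑ i ∈ S ∩ T, a i
        = ∑ i ∈ S, a i + ∑ i ∈ T, a i := Finset.sum_union_inter
    have hnn : 0 ≤ ∑ i ∈ S ∩ T, a i :=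
      Finset.sum_nonneg fun i _ => (hpos i).le
    have : ∑ i, a i ≤ 2 := by
      calc ∑ i, a i = ∑ i ∈ S ∪ T, a i := by rw [huniv]
        _ ≤ ∑ i ∈ S, a i + ∑ i ∈ T, a i := by linarith
        _ ≤ 2 := by linarith
    linarith
  -- transfer to indices
  set G : Finset (Fin 10) := Finset.univ.filter (fun i => tri i ∈ F) with hG
  have hFG : F = G.image tri := by
    ext S
    constructor
    · intro hS
      have hc : S.card = 3 := (Finset.mem_filter.mp hS).2.1
      obtain ⟨i, hi⟩ := tri_surj S hc
      exact Finset.mem_image.mpr ⟨i, by simp [hG, hi, hS], hi⟩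
    · intro hS
      obtain ⟨i, hi, rfl⟩ := Finset.mem_image.mp hS
      exact (Finset.mem_filter.mp hi).2
  have hcard : F.card = G.card := by
    rw [hFG, Finset.card_image_of_injective _ tri_inj]
  rw [hcard]
  apply aux_comb
  intro i hi j hj
  exact key _ (Finset.mem_filter.mp hi).2 _ (Finset.mem_filter.mp hj).2
end

section
/- The number of families of four pairwise distinct 3-element subsets of {1,2,3,4,5} in which every two members intersect in at least 2 elements equals 5: each such family consists of all four 3-subsets of a fixed 4-element subset. -/
/-!
Passing to complements, a 3-subset of a 5-set is an edge of `K₅`, and two 3-subsets meet in at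
least two points exactly when the complementary edges share a vertex. Four pairwise adjacent
edges of `K₅` form a star (a triangle has only three edges), so the family consists of the 3-subsets
avoiding the centre of the star, i.e. of all 3-subsets of a 4-set. Conversely any two distinct
3-subsets of a 4-set meet in two points, and there are `choose 5 4 = 5` such 4-sets.
-/

open Finset

section General

variable {α : Type*}

lemma eq_powersetCard_of_subset_of_card_eq {P : Finset (Finset α)} {U : Finset α} {k : ℕ}
    (hsub : P ⊆ U.powersetCard k) (hcard : #P = (#U).choose k) : P = U.powersetCard k :=
  eq_of_subset_of_card_le hsub (by rw [card_powersetCard, hcard])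

variable [DecidableEq α]

lemma card_add_card_le_card_inter_add {S T U : Finset α} (hS : S ⊆ U) (hT : T ⊆ U) :
    #S + #T ≤ #(S ∩ T) + #U := by
  have := card_le_card (union_subset hS hT)
  have := card_union_add_card_inter S T
  omega

lemma subset_powersetCard_sup {P : Finset (Finset α)} {k : ℕ} (hP : ∀ S ∈ P, #S = k) :
    P ⊆ (P.sup id).powersetCard k :=
  fun S hS => mem_powersetCard.2 ⟨le_sup (f := id) hS, hP S hS⟩

lemma sub_card_le_card_inter_of_mem_powersetCard {S T U : Finset α} {k : ℕ}
    (hS : S ∈ U.powersetCard k) (hT : T ∈ U.powersetCard k) : 2 * k - #U ≤ #(S ∩ T) := by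
  rw [mem_powersetCard] at hS hT
  have := card_add_card_le_card_inter_add hS.1 hT.1
  omega

lemma injOn_powersetCard_succ (k : ℕ) :
    Set.InjOn (fun U : Finset α => U.powersetCard (k + 1)) {U | k < #U} :=
  fun U hU V hV hUV => by
    rw [← powersetCard_sup U k hU, ← powersetCard_sup V k hV]
    exact congrArg (sup · id) hUV

lemma powersetCard_eq_filter_subset [Fintype α] (U : Finset α) (k : ℕ) :
    U.powersetCard k = univ.filter (fun S => #S = k ∧ S ⊆ U) := by
  ext S
  simp [mem_powersetCard, and_comm]

end General

/- The star argument of the header, checked over the `choose 10 4 = 210` families of four triples. -/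
set_option maxRecDepth 10000 in
lemma card_sup_eq_four_of_two_intersecting :
    ∀ P ∈ ((univ : Finset (Fin 5)).powersetCard 3).powersetCard 4,
      (∀ S ∈ P, ∀ T ∈ P, S ≠ T → 2 ≤ #(S ∩ T)) → #(P.sup id) = 4 := by
  decide

lemma two_intersecting_triples_iff (P : Finset (Finset (Fin 5))) :
    (#P = 4 ∧ (∀ S ∈ P, #S = 3) ∧ ∀ S ∈ P, ∀ T ∈ P, S ≠ T → 2 ≤ #(S ∩ T)) ↔
      ∃ U : Finset (Fin 5), #U = 4 ∧ U.powersetCard 3 = P := by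
  constructor
  · rintro ⟨hcard, hS, hP⟩
    have hP_mem : P ∈ ((univ : Finset (Fin 5)).powersetCard 3).powersetCard 4 :=
      mem_powersetCard.2 ⟨fun S hS' => mem_powersetCard.2 ⟨subset_univ S, hS S hS'⟩, hcard⟩
    have hU := card_sup_eq_four_of_two_intersecting P hP_mem hP
    refine ⟨P.sup id, hU, ?_⟩
    exact (eq_powersetCard_of_subset_of_card_eq (subset_powersetCard_sup hS)
      (by rw [hU, hcard]; rfl)).symm
  · rintro ⟨U, hU, rfl⟩
    refine ⟨by rw [card_powersetCard, hU]; rfl, fun S hS => (mem_powersetCard.1 hS).2,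
      fun S hS T hT _ => ?_⟩
    simpa [hU] using sub_card_le_card_inter_of_mem_powersetCard hS hT

/-- There are exactly 5 families of four pairwise distinct 3-element subsets
of {1,...,5} in which every two members intersect in at least 2 elements, and
each such family consists of all four 3-subsets of a fixed 4-element set. -/
theorem stmt_13 :
    ((Finset.univ : Finset (Finset (Finset (Fin 5)))).filter
      (fun P => P.card = 4 ∧ (∀ S ∈ P, S.card = 3) ∧
        ∀ S ∈ P, ∀ T ∈ P, S ≠ T → 2 ≤ (S ∩ T).card)).card = 5 ∧
    ∀ P : Finset (Finset (Fin 5)),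
      (P.card = 4 ∧ (∀ S ∈ P, S.card = 3) ∧
        ∀ S ∈ P, ∀ T ∈ P, S ≠ T → 2 ≤ (S ∩ T).card) →
      ∃ T : Finset (Fin 5), T.card = 4 ∧
        P = Finset.univ.filter (fun S => S.card = 3 ∧ S ⊆ T) := by
  refine ⟨?_, fun P hP => ?_⟩
  · have hfamilies : univ.filter (fun P : Finset (Finset (Fin 5)) => #P = 4 ∧ (∀ S ∈ P, #S = 3) ∧
        ∀ S ∈ P, ∀ T ∈ P, S ≠ T → 2 ≤ #(S ∩ T)) =
          (univ.powersetCard 4).image (fun U => U.powersetCard 3) := by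
      ext P
      simp [two_intersecting_triples_iff]
    rw [hfamilies, card_image_of_injOn, card_powersetCard]
    · rfl
    · exact (injOn_powersetCard_succ 2).mono fun U hU =>
        show 2 < #U by rw [(mem_powersetCard.1 hU).2]; norm_num
  · obtain ⟨U, hU, rfl⟩ := (two_intersecting_triples_iff P).1 hP
    exact ⟨U, hU, powersetCard_eq_filter_subset U 3⟩
end
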